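/- In the root poset of st_n(Φ), for any root α of Φ we have the identity st_n(s_x(α)) = s_{x_0} s_{x_1} ⋯ s_{x_n} s_{x_{n-1}} ⋯ s_{x_1} s_{x_0}(st_n(α)) = s_{x_n} s_{x_{n-1}} ⋯ s_{x_0} s_{x_1} ⋯ s_{x_{n-1}} s_{x_n}(st_n(α)). -/

import Mathlib

open Finset

section Core

variable {V : Type*} [Fintype V] [DecidableEq V]

/-- The simple root at vertex `v`, viewed as an integer-valued function on vertices. -/
def simpleRoot (v : V) : V → ℤ := fun y => if y = v then 1 else 0

/-- The simple reflection at vertex `v` for the Cartan matrix `A`, acting on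
integer-valued vertex functions. -/
def sRef (A : V → V → ℤ) (v : V) (α : V → ℤ) : V → ℤ :=
  fun y => if y = v then α v - ∑ z, A v z * α z else α y

/-- The root system associated to `A`: the closure of the simple roots under all
simple reflections. -/
inductive IsRoot (A : V → V → ℤ) : (V → ℤ) → Prop
  | simple (v : V) : IsRoot A (simpleRoot v)
  | reflect (v : V) {α : V → ℤ} : IsRoot A α → IsRoot A (sRef A v α)

/-- A positive root: a root all of whose coefficients are nonnegative. -/
def IsPosRoot (A : V → V → ℤ) (α : V → ℤ) : Prop :=
  IsRoot A α ∧ ∀ v, 0 ≤ α v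

/-- Cover relation of the root poset of Björner–Brenti: `γ = s_v β` with
`s_v β - β` a positive multiple of the simple root at `v`. -/
def Covers (A : V → V → ℤ) (β γ : V → ℤ) : Prop :=
  ∃ v, γ = sRef A v β ∧ β v < γ v

/-- The order relation of the root poset. -/
def RootLe (A : V → V → ℤ) : (V → ℤ) → (V → ℤ) → Prop :=
  Relation.ReflTransGen (Covers A)

/-- `α` admits an expression of length `k` (counting the starting simple root)
as simple reflections applied to a simple root. -/
def HasExpr (A : V → V → ℤ) (α : V → ℤ) (k : ℕ) : Prop :=
  ∃ (v : V) (w : List V), w.length + 1 = k ∧ α = w.foldr (sRef A) (simpleRoot v)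

/-- The depth of a positive root: the minimal length of an expression for it,
counting the starting simple root. -/
noncomputable def depth (A : V → V → ℤ) (α : V → ℤ) : ℕ := sInf {k | HasExpr A α k}

/-- `A` is a crystallographic Cartan matrix for a Coxeter diagram. -/
structure IsCartan (A : V → V → ℤ) : Prop where
  diag : ∀ v, A v v = 2
  offdiag : ∀ v w, v ≠ w → A v w ≤ 0
  symm_zero : ∀ v w, A v w = 0 → A w v = 0

/-- Elastic data at the vertex `x`: a partition `L ⊔ R` of the neighbors of `x`. -/
structure IsElastic (A : V → V → ℤ) (x : V) (L R : Finset V) : Prop where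
  disj : Disjoint L R
  union : ∀ y, y ∈ L ∪ R ↔ y ≠ x ∧ A x y ≠ 0

/-- The vertex set of the `n`-stretched diagram: `x` is replaced by the
path `x_0, …, x_n`, all other vertices kept. -/
abbrev StV (V : Type*) [DecidableEq V] (x : V) (n : ℕ) := {y : V // y ≠ x} ⊕ Fin (n + 1)

/-- The `n`-stretched Cartan matrix. -/
def stA (A : V → V → ℤ) (x : V) (L R : Finset V) (n : ℕ) :
    StV V x n → StV V x n → ℤ := fun v w =>
  match v, w with
  | Sum.inl y, Sum.inl z => A y.1 z.1
  | Sum.inl y, Sum.inr i =>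
      if (i = 0 ∧ y.1 ∈ L) ∨ (i = Fin.last n ∧ y.1 ∈ R) then A y.1 x else 0
  | Sum.inr i, Sum.inl y =>
      if (i = 0 ∧ y.1 ∈ L) ∨ (i = Fin.last n ∧ y.1 ∈ R) then A x y.1 else 0
  | Sum.inr i, Sum.inr j =>
      if i = j then 2 else if (i : ℕ) + 1 = (j : ℕ) ∨ (j : ℕ) + 1 = (i : ℕ) then -1 else 0

/-- The `n`-stretch of an integer-valued vertex function: the value at `x` is
repeated along the stretched path. -/
def stRoot (x : V) (n : ℕ) (α : V → ℤ) : StV V x n → ℤ := fun v =>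
  match v with
  | Sum.inl y => α y.1
  | Sum.inr _ => α x

end Core

/-!
On the stretched path the simple reflection `s_{x_i}` replaces the value `c_i` at `x_i` by
`c_{i-1} + c_{i+1} - c_i`, where the two legs act as virtual neighbours `x_{-1}`, `x_{n+1}`
carrying `-∑_{y ∈ L} A x y α y` and `-∑_{y ∈ R} A x y α y`. Starting from the constant
value `α x`, the sweep `s_{x_{n-1}} ⋯ s_{x_0}` drags the left boundary value along the path,
`s_{x_n}` then creates the value `(s_x α) x` at `x_n`, and the sweep `s_{x_0} ⋯ s_{x_{n-1}}`
carries this value back to `x_0`. Reversing the path exchanges `L` and `R`, which turns the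
first word into the second.
-/

open Fin.NatCast

section Reflection

variable {W W' : Type*} [Fintype W] [DecidableEq W] [Fintype W'] [DecidableEq W']

theorem sRef_eq_update (B : W → W → ℤ) (v : W) (γ : W → ℤ) :
    sRef B v γ = Function.update γ v (γ v - ∑ z, B v z * γ z) := by
  funext y
  by_cases h : y = v
  · subst h
    simp [sRef]
  · simp [sRef, h]

theorem sRef_comp_equiv {B : W → W → ℤ} {B' : W' → W' → ℤ} (e : W ≃ W')
    (hB : ∀ v w, B' (e v) (e w) = B v w) (v : W) (γ : W' → ℤ) :
    sRef B v (γ ∘ e) = sRef B' (e v) γ ∘ e := by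
  have hrow : ∑ z, B v z * γ (e z) = ∑ z, B' (e v) z * γ z :=
    Fintype.sum_equiv e _ _ fun z => by simp only [hB]
  funext y
  simp only [sRef, Function.comp_apply, e.apply_eq_iff_eq, hrow]

theorem foldr_sRef_comp_equiv {B : W → W → ℤ} {B' : W' → W' → ℤ} (e : W ≃ W')
    (hB : ∀ v w, B' (e v) (e w) = B v w) (l : List W) (γ : W' → ℤ) :
    l.foldr (sRef B) (γ ∘ e) = (l.map e).foldr (sRef B') γ ∘ e := by
  induction l with
  | nil => rfl
  | cons v l ih => simp only [List.foldr_cons, List.map_cons, ih, sRef_comp_equiv e hB]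

end Reflection

theorem finRange_succ_eq_map_range (n : ℕ) :
    List.finRange (n + 1) = (List.range (n + 1)).map fun m : ℕ => (m : Fin (n + 1)) := by
  rw [← List.map_coe_finRange_eq_range, List.map_map]
  exact (List.map_id _).symm.trans (List.map_congr_left fun i _ => (Fin.cast_val_eq_self i).symm)

section Stretch

variable {V : Type*} [DecidableEq V] {A : V → V → ℤ} {x : V} {L R : Finset V}

theorem IsElastic.symm (hE : IsElastic A x L R) : IsElastic A x R L :=
  ⟨hE.disj.symm, fun y => by rw [Finset.union_comm]; exact hE.union y⟩

theorem IsElastic.notMem_union (hE : IsElastic A x L R) : x ∉ L ∪ R :=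
  fun h => ((hE.union x).mp h).1 rfl

def sideSum (A : V → V → ℤ) (x : V) (α : V → ℤ) (S : Finset V) : ℤ :=
  ∑ y ∈ S, A x y * α y

/-- The values along the path are indexed by `ℕ`; those beyond `n` are never read. -/
def stVec (x : V) (n : ℕ) (α : V → ℤ) (g : ℕ → ℤ) : StV V x n → ℤ
  | Sum.inl y => α y.1
  | Sum.inr i => g i

theorem stRoot_eq_stVec (n : ℕ) (α : V → ℤ) :
    stRoot x n α = stVec x n α fun _ => α x := by
  funext v
  rcases v with y | i <;> rfl

theorem sum_stA_inr_inr_mul (n : ℕ) (g : ℕ → ℤ) (i : Fin (n + 1)) :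
    ∑ j : Fin (n + 1), stA A x L R n (Sum.inr i) (Sum.inr j) * g j =
      2 * g i - (if 0 < (i : ℕ) then g (i - 1) else 0)
        - (if (i : ℕ) < n then g (i + 1) else 0) := by
  have hsplit : ∀ j : Fin (n + 1), stA A x L R n (Sum.inr i) (Sum.inr j) * g j =
      (if (j : ℕ) = i then 2 * g j else 0)
        - (if (j : ℕ) = i - 1 then (if 0 < (i : ℕ) then g j else 0) else 0)
        - (if (j : ℕ) = i + 1 then g j else 0) := by
    intro j
    simp only [stA, Fin.ext_iff]
    split_ifs <;> omega
  simp only [hsplit, Finset.sum_sub_distrib]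
  rw [Fin.sum_univ_eq_sum_range (fun j => if j = (i : ℕ) then 2 * g j else 0),
    Fin.sum_univ_eq_sum_range
      (fun j => if j = (i : ℕ) - 1 then (if 0 < (i : ℕ) then g j else 0) else 0),
    Fin.sum_univ_eq_sum_range (fun j => if j = (i : ℕ) + 1 then g j else 0)]
  simp only [Finset.sum_ite_eq', Finset.mem_range]
  have := i.isLt
  split_ifs <;> first | rfl | omega

def revPath (x : V) (n : ℕ) : StV V x n ≃ StV V x n :=
  Equiv.sumCongr (Equiv.refl _) Fin.revPerm

theorem stA_revPath (n : ℕ) (v w : StV V x n) :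
    stA A x R L n (revPath x n v) (revPath x n w) = stA A x L R n v w := by
  have h0 : ∀ i : Fin (n + 1), Fin.rev i = 0 ↔ i = Fin.last n := by
    intro i
    rw [Fin.rev_eq_iff, Fin.rev_zero]
  have hlast : ∀ i : Fin (n + 1), Fin.rev i = Fin.last n ↔ i = 0 := by
    intro i
    rw [Fin.rev_eq_iff, Fin.rev_last]
  rcases v with y | i <;> rcases w with z | j
  all_goals
    simp only [revPath, stA, Equiv.sumCongr_apply, Sum.map_inl, Sum.map_inr, Equiv.refl_apply,
      Fin.revPerm_apply, h0, hlast]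
  · exact if_congr or_comm rfl rfl
  · exact if_congr or_comm rfl rfl
  · have hi := i.isLt
    have hj := j.isLt
    simp only [Fin.rev_inj, Fin.val_rev]
    congr 1
    exact if_congr (by omega) rfl rfl

theorem stRoot_comp_revPath (n : ℕ) (α : V → ℤ) :
    stRoot x n α ∘ revPath x n = stRoot x n α := by
  funext v
  rcases v with y | i <;> rfl

theorem map_revPath_palindrome (n : ℕ) :
    ((List.finRange (n+1)).reverse.map Sum.inr ++
        ((List.finRange (n+1)).tail).map Sum.inr : List (StV V x n)).map (revPath x n) =
      (List.finRange (n+1)).map Sum.inr ++ ((List.finRange (n+1)).reverse.tail).map Sum.inr := by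
  have hinr : (revPath x n ∘ Sum.inr : Fin (n + 1) → StV V x n) = Sum.inr ∘ Fin.rev := rfl
  simp only [List.map_append, List.map_map, hinr, List.finRange_reverse, ← List.map_tail]
  congr 1
  exact List.map_congr_left fun i _ => congrArg Sum.inr (Fin.rev_rev i)

variable [Fintype V]

theorem sum_subtype_ne_ite_mem {S : Finset V} (hx : x ∉ S) (f : V → ℤ) :
    ∑ y : {y : V // y ≠ x}, (if y.1 ∈ S then f y.1 else 0) = ∑ y ∈ S, f y := by
  rw [← Finset.sum_subtype (Finset.univ.erase x) (by simp) (fun y => if y ∈ S then f y else 0),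
    ← Finset.sum_filter]
  congr 1
  ext y
  simp only [Finset.mem_filter, Finset.mem_erase, Finset.mem_univ, and_true]
  exact ⟨fun h => h.2, fun h => ⟨fun hy => hx (hy ▸ h), h⟩⟩

theorem IsElastic.sum_row (hA : IsCartan A) (hE : IsElastic A x L R) (α : V → ℤ) :
    ∑ z, A x z * α z = 2 * α x + sideSum A x α L + sideSum A x α R := by
  have hsupp : ∑ z ∈ insert x (L ∪ R), A x z * α z = ∑ z, A x z * α z :=
    Finset.sum_subset (Finset.subset_univ _) fun z _ hz => by
      have hzx : z ≠ x := fun h => hz (h ▸ Finset.mem_insert_self _ _)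
      have hA0 : A x z = 0 := by
        by_contra h
        exact hz (Finset.mem_insert_of_mem ((hE.union z).mpr ⟨hzx, h⟩))
      rw [hA0, zero_mul]
  rw [← hsupp, Finset.sum_insert hE.notMem_union, Finset.sum_union hE.disj, hA.diag, sideSum,
    sideSum, add_assoc]

theorem sum_stA_inr_inl_mul (hE : IsElastic A x L R) (n : ℕ) (α : V → ℤ) (i : Fin (n + 1)) :
    ∑ y : {y : V // y ≠ x}, stA A x L R n (Sum.inr i) (Sum.inl y) * α y.1 =
      (if (i : ℕ) = 0 then sideSum A x α L else 0)
        + (if (i : ℕ) = n then sideSum A x α R else 0) := by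
  have hsplit : ∀ y : {y : V // y ≠ x}, stA A x L R n (Sum.inr i) (Sum.inl y) * α y.1 =
      (if (i : ℕ) = 0 then (if y.1 ∈ L then A x y.1 * α y.1 else 0) else 0) +
        (if (i : ℕ) = n then (if y.1 ∈ R then A x y.1 * α y.1 else 0) else 0) := by
    intro y
    have hLR := fun h : y.1 ∈ L => Finset.disjoint_left.mp hE.disj h
    simp only [stA, Fin.ext_iff, Fin.val_zero, Fin.val_last]
    split_ifs <;> grind
  have hxL : x ∉ L := fun h => hE.notMem_union (Finset.mem_union_left _ h)
  have hxR : x ∉ R := fun h => hE.notMem_union (Finset.mem_union_right _ h)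
  simp only [hsplit, Finset.sum_add_distrib, Finset.sum_ite_irrel, Finset.sum_const_zero,
    sum_subtype_ne_ite_mem hxL (fun v => A x v * α v),
    sum_subtype_ne_ite_mem hxR (fun v => A x v * α v), sideSum]

theorem sum_stA_inr_mul_stVec (hE : IsElastic A x L R) (n : ℕ) (α : V → ℤ) (g : ℕ → ℤ)
    (i : Fin (n + 1)) :
    ∑ z, stA A x L R n (Sum.inr i) z * stVec x n α g z =
      2 * g i - (if 0 < (i : ℕ) then g (i - 1) else -sideSum A x α L)
        - (if (i : ℕ) < n then g (i + 1) else -sideSum A x α R) := by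
  rw [Fintype.sum_sum_type]
  simp only [stVec, sum_stA_inr_inl_mul hE, sum_stA_inr_inr_mul]
  have := i.isLt
  split_ifs <;> omega

theorem sRef_stA_stVec (hE : IsElastic A x L R) {n : ℕ} (α : V → ℤ) {g g' : ℕ → ℤ}
    {i : ℕ} (hi : i ≤ n) (hne : ∀ m ≤ n, m ≠ i → g' m = g m)
    (heq : g' i = (if 0 < i then g (i - 1) else -sideSum A x α L)
      + (if i < n then g (i + 1) else -sideSum A x α R) - g i) :
    sRef (stA A x L R n) (Sum.inr i) (stVec x n α g) = stVec x n α g' := by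
  have hval : ((i : Fin (n + 1)) : ℕ) = i := Fin.val_cast_of_lt (by omega)
  rw [sRef_eq_update, sum_stA_inr_mul_stVec hE, hval]
  funext v
  rcases v with y | j
  · rfl
  · by_cases hj : (j : ℕ) = i
    · obtain rfl : j = i := Fin.ext (hj.trans hval.symm)
      simp only [Function.update_self, stVec, hval, heq]
      ring
    · have hji : Sum.inr j ≠ (Sum.inr (i : Fin (n + 1)) : StV V x n) :=
        fun h => hj (by rw [Sum.inr_injective h, hval])
      rw [Function.update_of_ne hji]
      exact (hne j (Nat.lt_succ_iff.mp j.isLt) hj).symm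

theorem sRef_stA_stVec_step_succ (hE : IsElastic A x L R) {n : ℕ} (α : V → ℤ) (v : ℤ)
    {j : ℕ} (hj : j < n) :
    sRef (stA A x L R n) (Sum.inr j)
        (stVec x n α fun m => if m < j then -sideSum A x α L else v) =
      stVec x n α fun m => if m < j + 1 then -sideSum A x α L else v :=
  sRef_stA_stVec hE α hj.le (fun m _ _ => by split_ifs <;> omega) (by split_ifs <;> omega)

theorem sRef_stA_stVec_step_pred (hE : IsElastic A x L R) {n : ℕ} (α : V → ℤ) (v : ℤ)
    {j : ℕ} (hj : j < n) :
    sRef (stA A x L R n) (Sum.inr j)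
        (stVec x n α fun m => if m < j + 1 then -sideSum A x α L else v) =
      stVec x n α fun m => if m < j then -sideSum A x α L else v :=
  sRef_stA_stVec hE α hj.le (fun m _ _ => by split_ifs <;> omega) (by split_ifs <;> omega)

theorem sRef_stA_stVec_last (hE : IsElastic A x L R) (n : ℕ) (α : V → ℤ) (a : ℤ) :
    sRef (stA A x L R n) (Sum.inr n)
        (stVec x n α fun m => if m < n then -sideSum A x α L else a) =
      stVec x n α fun m =>
        if m < n then -sideSum A x α L else -a - sideSum A x α L - sideSum A x α R :=
  sRef_stA_stVec hE α le_rfl (fun m _ _ => by split_ifs <;> omega) (by split_ifs <;> omega)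

theorem foldr_sRef_stA_sweep_up (hE : IsElastic A x L R) {n : ℕ} (α : V → ℤ) (a : ℤ)
    {k : ℕ} (hk : k ≤ n) :
    (((List.range k).reverse.map fun m : ℕ => (m : Fin (n + 1))).map Sum.inr).foldr
        (sRef (stA A x L R n)) (stVec x n α fun _ => a) =
      stVec x n α fun m => if m < k then -sideSum A x α L else a := by
  induction k with
  | zero => simp
  | succ k ih =>
    rw [List.range_succ, List.reverse_append, List.reverse_singleton, List.singleton_append,
      List.map_cons, List.map_cons, List.foldr_cons, ih (by omega),
      sRef_stA_stVec_step_succ hE α a hk]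

theorem foldr_sRef_stA_sweep_down (hE : IsElastic A x L R) {n : ℕ} (α : V → ℤ) (b : ℤ)
    {j d : ℕ} (hjd : j + d = n) :
    (((List.range' j d).map fun m : ℕ => (m : Fin (n + 1))).map Sum.inr).foldr
        (sRef (stA A x L R n)) (stVec x n α fun m => if m < n then -sideSum A x α L else b) =
      stVec x n α fun m => if m < j then -sideSum A x α L else b := by
  induction d generalizing j with
  | zero => simp [← hjd]
  | succ d ih =>
    rw [List.range'_succ, List.map_cons, List.map_cons, List.foldr_cons, ih (by omega),
      sRef_stA_stVec_step_pred hE α b (by omega)]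

theorem stRoot_sRef_eq_stVec (hA : IsCartan A) (hE : IsElastic A x L R) (n : ℕ) (α : V → ℤ) :
    stRoot x n (sRef A x α) =
      stVec x n α fun _ => -α x - sideSum A x α L - sideSum A x α R := by
  funext v
  rcases v with y | i
  · exact if_neg y.2
  · change sRef A x α x = -α x - sideSum A x α L - sideSum A x α R
    rw [sRef, if_pos rfl, hE.sum_row hA]
    ring

theorem stRoot_sRef_eq_foldr_palindrome (hA : IsCartan A) (hE : IsElastic A x L R) (n : ℕ)
    (α : V → ℤ) :
    stRoot x n (sRef A x α) =
      (((List.finRange (n+1)).map Sum.inr ++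
        ((List.finRange (n+1)).reverse.tail).map Sum.inr : List (StV V x n)).foldr
          (sRef (stA A x L R n)) (stRoot x n α)) := by
  have hup : (List.finRange (n + 1)).reverse.tail =
      (List.range n).reverse.map fun m : ℕ => (m : Fin (n + 1)) := by
    rw [finRange_succ_eq_map_range, List.range_succ]
    simp
  rw [List.foldr_append, hup, stRoot_eq_stVec n α, foldr_sRef_stA_sweep_up hE α (α x) le_rfl,
    finRange_succ_eq_map_range, List.range_succ, List.map_append, List.map_append,
    List.foldr_append, List.map_singleton, List.map_singleton, List.foldr_cons, List.foldr_nil,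
    sRef_stA_stVec_last hE, List.range_eq_range', foldr_sRef_stA_sweep_down hE α _ (zero_add n),
    stRoot_sRef_eq_stVec hA hE]
  simp

theorem stRoot_sRef_eq_foldr_palindrome_rev (hA : IsCartan A) (hE : IsElastic A x L R) (n : ℕ)
    (α : V → ℤ) :
    stRoot x n (sRef A x α) =
      (((List.finRange (n+1)).reverse.map Sum.inr ++
        ((List.finRange (n+1)).tail).map Sum.inr : List (StV V x n)).foldr
          (sRef (stA A x L R n)) (stRoot x n α)) := by
  rw [← stRoot_comp_revPath n α, foldr_sRef_comp_equiv (revPath x n) (stA_revPath n),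
    map_revPath_palindrome, ← stRoot_sRef_eq_foldr_palindrome hA hE.symm, stRoot_comp_revPath]

end Stretch

theorem stretch_reflection_words_general {V : Type*} [Fintype V] [DecidableEq V]
    (A : V → V → ℤ) (hA : IsCartan A) (x : V) (L R : Finset V)
    (hE : IsElastic A x L R) (n : ℕ) (α : V → ℤ) :
    stRoot x n (sRef A x α) =
      (((List.finRange (n+1)).map Sum.inr ++
        ((List.finRange (n+1)).reverse.tail).map Sum.inr : List (StV V x n)).foldr
          (sRef (stA A x L R n)) (stRoot x n α)) ∧
    stRoot x n (sRef A x α) =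
      (((List.finRange (n+1)).reverse.map Sum.inr ++
        ((List.finRange (n+1)).tail).map Sum.inr : List (StV V x n)).foldr
          (sRef (stA A x L R n)) (stRoot x n α)) :=
  ⟨stRoot_sRef_eq_foldr_palindrome hA hE n α, stRoot_sRef_eq_foldr_palindrome_rev hA hE n α⟩

/-- the stretch of `s_x α` is obtained from the stretch of `α` by
applying `s_{x_0} s_{x_1} ⋯ s_{x_n} s_{x_{n-1}} ⋯ s_{x_0}`, or equivalently
`s_{x_n} s_{x_{n-1}} ⋯ s_{x_0} s_{x_1} ⋯ s_{x_n}`. -/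
theorem stretch_reflection_words {V : Type*} [Fintype V] [DecidableEq V]
    (A : V → V → ℤ) (hA : IsCartan A) (x : V) (L R : Finset V)
    (hE : IsElastic A x L R) (n : ℕ) (α : V → ℤ) (hα : IsRoot A α) :
    stRoot x n (sRef A x α) =
      (((List.finRange (n+1)).map Sum.inr ++
        ((List.finRange (n+1)).reverse.tail).map Sum.inr : List (StV V x n)).foldr
          (sRef (stA A x L R n)) (stRoot x n α)) ∧
    stRoot x n (sRef A x α) =
      (((List.finRange (n+1)).reverse.map Sum.inr ++
        ((List.finRange (n+1)).tail).map Sum.inr : List (StV V x n)).foldr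
          (sRef (stA A x L R n)) (stRoot x n α)) :=
  stretch_reflection_words_general A hA x L R hE n α
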